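/- arXiv:1307.2375 — 3 statements merged into one kernel-verified Lean document; each statement's English description precedes it below -/
import Mathlib

section
/- Let 𝔤 be a real semisimple Lie algebra with Cartan decomposition 𝔤 = 𝔨 ⊕ 𝔰 determined by a Cartan involution θ, and let 𝔤ₙ be the maximal noncompact ideal of 𝔤 (the ideal generated by 𝔰). If 𝔥 ⊆ 𝔤 is a θ-stable Lie subalgebra with 𝔤 = 𝔥 + 𝔨, then 𝔤ₙ ⊆ 𝔥. -/
/-!
Writing `x = a + b` with `a ∈ 𝔥` and `b ∈ 𝔨`, an element `x ∈ 𝔰` satisfies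
`2x = x - θx = a - θa ∈ 𝔥`, so `𝔰 ⊆ 𝔥`. Since `[𝔨, 𝔰] ⊆ 𝔰`, `[𝔰, 𝔰] ⊆ 𝔨` and `𝔤 = 𝔨 + 𝔰`,
the Jacobi identity shows that `𝔰 + [𝔰, 𝔰]` is already an ideal, so it is the ideal generated
by `𝔰`, and it lies in the subalgebra `𝔥`.
-/

section Involution

variable {R L : Type*} [CommRing R] [LieRing L] [LieAlgebra R L] (θ : L →ₗ⁅R⁆ L)

def antiFixedPoints : Set L := {x | θ x = -x}

/-- `𝔰 + [𝔰, 𝔰]`, which turns out to be the ideal generated by `𝔰`. -/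
def antiFixedPointsSpan : Submodule R L :=
  Submodule.span R
    (antiFixedPoints θ ∪ {z | ∃ x ∈ antiFixedPoints θ, ∃ y ∈ antiFixedPoints θ, ⁅x, y⁆ = z})

variable {θ}

theorem lie_mem_antiFixedPoints_of_eq_self {k s : L} (hk : θ k = k)
    (hs : s ∈ antiFixedPoints θ) : ⁅k, s⁆ ∈ antiFixedPoints θ := by
  simp_all [antiFixedPoints]

theorem lie_mem_antiFixedPoints_of_eq_self_right {s k : L} (hs : s ∈ antiFixedPoints θ)
    (hk : θ k = k) : ⁅s, k⁆ ∈ antiFixedPoints θ := by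
  simp_all [antiFixedPoints]

theorem apply_lie_eq_self_of_mem_antiFixedPoints {s t : L} (hs : s ∈ antiFixedPoints θ)
    (ht : t ∈ antiFixedPoints θ) : θ ⁅s, t⁆ = ⁅s, t⁆ := by
  simp_all [antiFixedPoints]

theorem lie_mem_span_of_forall_lie_mem {x : L} {s : Set L}
    (hx : ∀ y ∈ s, ⁅x, y⁆ ∈ Submodule.span R s) :
    ∀ m ∈ Submodule.span R s, ⁅x, m⁆ ∈ Submodule.span R s := by
  have : Submodule.span R s ≤ (Submodule.span R s).comap (LieModule.toEnd R L L x) :=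
    Submodule.span_le.mpr hx
  exact fun m hm ↦ this hm

theorem subset_antiFixedPointsSpan : antiFixedPoints θ ⊆ antiFixedPointsSpan θ :=
  Set.subset_union_left.trans Submodule.subset_span

theorem lie_antiFixedPoints_mem_antiFixedPointsSpan {s t : L} (hs : s ∈ antiFixedPoints θ)
    (ht : t ∈ antiFixedPoints θ) : ⁅s, t⁆ ∈ antiFixedPointsSpan θ :=
  Submodule.subset_span (Or.inr ⟨s, hs, t, ht, rfl⟩)

theorem lie_mem_antiFixedPointsSpan_of_eq_self {k m : L} (hk : θ k = k)
    (hm : m ∈ antiFixedPointsSpan θ) : ⁅k, m⁆ ∈ antiFixedPointsSpan θ := by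
  refine lie_mem_span_of_forall_lie_mem ?_ m hm
  rintro _ (hs | ⟨s, hs, t, ht, rfl⟩)
  · exact subset_antiFixedPointsSpan (lie_mem_antiFixedPoints_of_eq_self hk hs)
  · rw [leibniz_lie]
    exact add_mem
      (lie_antiFixedPoints_mem_antiFixedPointsSpan (lie_mem_antiFixedPoints_of_eq_self hk hs) ht)
      (lie_antiFixedPoints_mem_antiFixedPointsSpan hs (lie_mem_antiFixedPoints_of_eq_self hk ht))

theorem lie_mem_antiFixedPointsSpan_of_mem_antiFixedPoints {s m : L} (hs : s ∈ antiFixedPoints θ)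
    (hm : m ∈ antiFixedPointsSpan θ) : ⁅s, m⁆ ∈ antiFixedPointsSpan θ := by
  refine lie_mem_span_of_forall_lie_mem ?_ m hm
  rintro _ (ht | ⟨t, ht, u, hu, rfl⟩)
  · exact lie_antiFixedPoints_mem_antiFixedPointsSpan hs ht
  · rw [leibniz_lie]
    refine add_mem (subset_antiFixedPointsSpan ?_) (subset_antiFixedPointsSpan ?_)
    · exact lie_mem_antiFixedPoints_of_eq_self
        (apply_lie_eq_self_of_mem_antiFixedPoints hs ht) hu
    · exact lie_mem_antiFixedPoints_of_eq_self_right ht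
        (apply_lie_eq_self_of_mem_antiFixedPoints hs hu)

variable [Invertible (2 : R)]

theorem exists_eq_add_of_involutive (hθ : Function.Involutive θ) (x : L) :
    ∃ k p, θ k = k ∧ p ∈ antiFixedPoints θ ∧ x = k + p := by
  refine ⟨(⅟2 : R) • (x + θ x), (⅟2 : R) • (x - θ x), ?_, ?_, ?_⟩
  · rw [map_smul, map_add, hθ x, add_comm]
  · rw [antiFixedPoints, Set.mem_ofPred_eq, map_smul, map_sub, hθ x, ← smul_neg, neg_sub]
  · rw [← smul_add, add_add_sub_cancel, ← two_smul R, smul_smul, invOf_mul_self, one_smul]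

theorem lie_mem_antiFixedPointsSpan (hθ : Function.Involutive θ) (x : L) {m : L}
    (hm : m ∈ antiFixedPointsSpan θ) : ⁅x, m⁆ ∈ antiFixedPointsSpan θ := by
  obtain ⟨k, p, hk, hp, rfl⟩ := exists_eq_add_of_involutive hθ x
  rw [add_lie]
  exact add_mem (lie_mem_antiFixedPointsSpan_of_eq_self hk hm)
    (lie_mem_antiFixedPointsSpan_of_mem_antiFixedPoints hp hm)

theorem lieSpan_antiFixedPoints_le (hθ : Function.Involutive θ) {h : LieSubalgebra R L}
    (hs : antiFixedPoints θ ⊆ h) :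
    (LieSubmodule.lieSpan R L (antiFixedPoints θ) : Submodule R L) ≤ h.toSubmodule := by
  let N : LieIdeal R L :=
    { antiFixedPointsSpan θ with lie_mem := lie_mem_antiFixedPointsSpan hθ _ }
  have hN : LieSubmodule.lieSpan R L (antiFixedPoints θ) ≤ N :=
    LieSubmodule.lieSpan_le.mpr subset_antiFixedPointsSpan
  refine le_trans hN (Submodule.span_le.mpr ?_)
  rintro _ (hx | ⟨s, hs', t, ht, rfl⟩)
  · exact hs hx
  · exact h.lie_mem (hs hs') (hs ht)

theorem antiFixedPoints_subset_of_eq_add {h : LieSubalgebra R L} (hθh : ∀ x ∈ h, θ x ∈ h)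
    (hsum : ∀ x : L, ∃ a ∈ h, ∃ b : L, θ b = b ∧ x = a + b) : antiFixedPoints θ ⊆ h := by
  intro x hx
  obtain ⟨a, ha, b, hb, rfl⟩ := hsum x
  have h2 : (2 : R) • (a + b) = a - θ a := by
    have : θ (a + b) = -(a + b) := hx
    rw [map_add, hb] at this
    linear_combination (norm := module) this
  have : a + b = (⅟2 : R) • (a - θ a) := by rw [← h2, smul_smul, invOf_mul_self, one_smul]
  rw [SetLike.mem_coe, this]
  exact h.smul_mem _ (h.sub_mem ha (hθh a ha))

end Involution

theorem stmt1_general {g : Type*} [LieRing g] [LieAlgebra ℝ g]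
    (θ : g →ₗ⁅ℝ⁆ g) (hinv : ∀ x, θ (θ x) = x)
    (gn : LieIdeal ℝ g) (hgn : gn = LieSubmodule.lieSpan ℝ g {x : g | θ x = -x})
    (h : LieSubalgebra ℝ g) (hθstable : ∀ x ∈ h, θ x ∈ h)
    (hsum : ∀ x : g, ∃ a ∈ h, ∃ b : g, θ b = b ∧ x = a + b) :
    ∀ x ∈ gn, x ∈ h := by
  subst hgn
  exact fun x hx ↦ lieSpan_antiFixedPoints_le hinv
    (antiFixedPoints_subset_of_eq_add hθstable hsum) hx

/-- Let `𝔤` be a real semisimple Lie algebra with Cartan involution `θ` and Cartan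
decomposition `𝔤 = 𝔨 ⊕ 𝔰`, and let `𝔤ₙ` be the ideal generated by `𝔰`.  If `𝔥` is a `θ`-stable
subalgebra with `𝔤 = 𝔥 + 𝔨`, then `𝔤ₙ ⊆ 𝔥`. -/
theorem stmt1 {g : Type*} [LieRing g] [LieAlgebra ℝ g] [Module.Finite ℝ g]
    [LieAlgebra.IsSemisimple ℝ g]
    (θ : g →ₗ⁅ℝ⁆ g) (hinv : ∀ x, θ (θ x) = x)
    -- Cartan: the form `(x, y) ↦ -B(x, θ y)` is positive definite
    (hcartan : ∀ x : g, x ≠ 0 → 0 < -(killingForm ℝ g x (θ x)))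
    (gn : LieIdeal ℝ g) (hgn : gn = LieSubmodule.lieSpan ℝ g {x : g | θ x = -x})
    (h : LieSubalgebra ℝ g) (hθstable : ∀ x ∈ h, θ x ∈ h)
    (hsum : ∀ x : g, ∃ a ∈ h, ∃ b : g, θ b = b ∧ x = a + b) :
    ∀ x ∈ gn, x ∈ h :=
  stmt1_general θ hinv gn hgn h hθstable hsum
end

section
/- If c₁ and c₂ are octonions both orthogonal to ℂ ⊂ 𝕆 (i.e., in the orthogonal complement 𝕆_I of the complex numbers embedded in the octonions) and their product c₁c₂ also lies in 𝕆_I, then c₁ and c₂ are orthogonal to each other. -/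
noncomputable section

/-- The octonions, realized by the Cayley–Dickson construction on the quaternions. -/
abbrev Oct : Type := Quaternion ℝ × Quaternion ℝ

/-- Octonion multiplication (Cayley–Dickson): `(a,b)(c,d) = (ac − d̄b, da + bc̄)`. -/
def omul (x y : Oct) : Oct :=
  (x.1 * y.1 - star y.2 * x.2, y.2 * x.1 + x.2 * star y.1)

/-- Octonion conjugation. -/
def oconj (x : Oct) : Oct := (star x.1, -x.2)

/-- Real part of an octonion. -/
def ore (x : Oct) : ℝ := x.1.re

/-- The standard inner product `⟨x, y⟩ = Re (x ȳ)` on the octonions. -/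
def oinner (x y : Oct) : ℝ := ore (omul x (oconj y))

/-- The squared norm of an octonion. -/
def onormSq (x : Oct) : ℝ := oinner x x

/-- The standard embedding `ℂ = span{1, i} ⊂ 𝕆`. -/
def embC (z : ℂ) : Oct := ((⟨z.re, z.im, 0, 0⟩ : Quaternion ℝ), 0)

/-- `𝕆_I = ℂ^⊥`, the orthogonal complement of `ℂ` in the octonions. -/
def OI : Set Oct := {x : Oct | ∀ z : ℂ, oinner x (embC z) = 0}

/-
Conjugation is `x̄ = 2 Re x − x`, so `⟨c₁, c₂⟩ = Re (c₁ c̄₂) = 2 Re c₁ Re c₂ − Re (c₁ c₂)`.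
Orthogonality to `1 ∈ ℂ` says `Re c₂ = 0` and `Re (c₁ c₂) = 0`, hence `⟨c₁, c₂⟩ = 0`.
-/

theorem oinner_eq_two_mul_ore_mul_ore_sub_ore_omul (x y : Oct) :
    oinner x y = 2 * ore x * ore y - ore (omul x y) := by
  simp only [oinner, omul, oconj, ore, Quaternion.re_sub, Quaternion.re_mul,
    Quaternion.re_star, Quaternion.imI_star, Quaternion.imJ_star, Quaternion.imK_star,
    Quaternion.re_neg, Quaternion.imI_neg, Quaternion.imJ_neg, Quaternion.imK_neg, star_neg]
  ring

theorem oinner_embC_one (x : Oct) : oinner x (embC 1) = ore x := by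
  have embC_one : embC 1 = (1, 0) := by ext <;> rfl
  simp [oinner, omul, oconj, ore, embC_one]

theorem ore_eq_zero_of_mem_OI {x : Oct} (hx : x ∈ OI) : ore x = 0 :=
  oinner_embC_one x ▸ hx 1

theorem stmt8_general (c₁ c₂ : Oct) (h₂ : c₂ ∈ OI)
    (h₁₂ : omul c₁ c₂ ∈ OI) : oinner c₁ c₂ = 0 := by
  rw [oinner_eq_two_mul_ore_mul_ore_sub_ore_omul, ore_eq_zero_of_mem_OI h₂,
    ore_eq_zero_of_mem_OI h₁₂]
  ring

/-- If `c₁, c₂ ∈ 𝕆_I = ℂ^⊥` and their product `c₁c₂` also lies in `𝕆_I`, then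
`c₁` and `c₂` are orthogonal to each other. -/
theorem stmt8 (c₁ c₂ : Oct) (h₁ : c₁ ∈ OI) (h₂ : c₂ ∈ OI)
    (h₁₂ : omul c₁ c₂ ∈ OI) : oinner c₁ c₂ = 0 :=
  stmt8_general c₁ c₂ h₂ h₁₂
end
end

section
/- Every nonzero semisimple (diagonalizable over ℂ) element of i·𝔰𝔲(2,1) (Hermitian matrices with respect to the form diag(1,1,−1), trace zero) is conjugate under SU(2,1) to either a real diagonal matrix diag(α₁, α₂, −α₁−α₂) or a matrix of the form [[2α,0,0],[0,−α,γi],[0,γi,−α]] with α, γ ∈ ℝ. -/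
/-!
Write `x = P D P⁻¹` with `D = diagonal d`. Since `x` is self-adjoint for `⟨u, v⟩ = uᴴ J v`, the
Gram matrix `G = Pᴴ J P` satisfies `conj dᵢ · Gᵢⱼ = Gᵢⱼ · dⱼ`, and as `G` is invertible the
spectrum is closed under conjugation.

If the spectrum is real, `G` is block diagonal along the eigenspaces, and diagonalizing a `2 × 2`
block if necessary makes the eigenvectors `J`-orthogonal. Then `det G = -|det P|²` and the
existence of a vector of positive norm show that exactly one of them is timelike, and normalizing
gives `diag(α₁, α₂, -α₁-α₂)`. Otherwise the eigenvalues are `-2 Re λ, λ, conj λ` with `λ ∉ ℝ`;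
the `λ`- and `conj λ`-eigenvectors `v, w` are isotropic with `⟨v, w⟩ = c ≠ 0`, and
`(v ± w / c) / √2` is a spacelike-timelike pair on which `x` acts as
`[[Re λ, i Im λ], [i Im λ, Re λ]]`.

Such a `U(2,1)`-frame is moved into `SU(2,1)` by rescaling its first vector by the unimodular
scalar `conj (det g)`; this commutes with both normal forms.
-/

open Matrix Complex

namespace SU21

lemma conjTranspose_mul_mul_mul {n : Type*} [Fintype n] (S P M : Matrix n n ℂ) :
    (P * M)ᴴ * S * (P * M) = Mᴴ * (Pᴴ * S * P) * M := by
  simp only [conjTranspose_mul, Matrix.mul_assoc]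

lemma conjTranspose_submatrix_mul_mul {n : Type*} [Fintype n] (S P : Matrix n n ℂ)
    (σ : Equiv.Perm n) :
    (P.submatrix id σ)ᴴ * S * P.submatrix id σ = (Pᴴ * S * P).submatrix σ σ := by
  ext i j
  simp [mul_apply]

section Eigenframe

variable {n : Type*} [Fintype n] [DecidableEq n]

def IsEigenframe (x P : Matrix n n ℂ) (d : n → ℂ) : Prop :=
  IsUnit P.det ∧ x * P = P * diagonal d

lemma isEigenframe_of_isDiag {x P : Matrix n n ℂ} (hP : IsUnit P.det)
    (hD : (P⁻¹ * x * P).IsDiag) : IsEigenframe x P (P⁻¹ * x * P).diag := by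
  refine ⟨hP, ?_⟩
  rw [hD.diagonal_diag, ← Matrix.mul_assoc, ← Matrix.mul_assoc, mul_nonsing_inv _ hP,
    Matrix.one_mul]

namespace IsEigenframe

variable {x P : Matrix n n ℂ} {d : n → ℂ}

lemma perm (h : IsEigenframe x P d) (σ : Equiv.Perm n) :
    IsEigenframe x (P.submatrix id σ) (d ∘ σ) := by
  refine ⟨?_, ?_⟩
  · rw [det_permute']
    exact (Units.isUnit _).map (Int.castRingHom ℂ) |>.mul h.1
  · ext i j
    have hij := congrFun (congrFun h.2 i) (σ j)
    rw [mul_diagonal] at hij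
    rw [mul_diagonal]
    simpa [mul_apply] using hij

lemma sum_eq_trace (h : IsEigenframe x P d) : ∑ i, d i = x.trace := by
  have hx : x = P * diagonal d * P⁻¹ := by
    rw [← h.2, Matrix.mul_assoc, mul_nonsing_inv _ h.1, Matrix.mul_one]
  rw [hx, trace_mul_comm, ← Matrix.mul_assoc, nonsing_inv_mul _ h.1, Matrix.one_mul,
    trace_diagonal]

lemma eq_zero_of_forall_eq (h : IsEigenframe x P d) (htr : x.trace = 0)
    (hd : ∀ i j, d i = d j) : x = 0 := by
  have hd0 : d = 0 := by
    funext i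
    have hsum := h.sum_eq_trace
    rw [htr, Finset.sum_congr rfl fun j _ => hd j i, Finset.sum_const, nsmul_eq_mul] at hsum
    have hcard : (Fintype.card n : ℂ) ≠ 0 := Nat.cast_ne_zero.mpr (Fintype.card_pos_iff.mpr ⟨i⟩).ne'
    exact (mul_eq_zero.mp hsum).resolve_left hcard
  have hxP : x * P = 0 := by simp [h.2, hd0]
  rw [← Matrix.mul_one x, ← mul_nonsing_inv _ h.1, ← Matrix.mul_assoc, hxP, Matrix.zero_mul]

lemma gram_apply_eq_zero {S : Matrix n n ℂ} (hx : xᴴ * S = S * x) (h : IsEigenframe x P d)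
    {i j : n} (hij : star (d i) ≠ d j) : (Pᴴ * S * P) i j = 0 := by
  have hG : (diagonal d)ᴴ * (Pᴴ * S * P) = Pᴴ * S * P * diagonal d := by
    calc (diagonal d)ᴴ * (Pᴴ * S * P) = (x * P)ᴴ * S * P := by
          rw [h.2, conjTranspose_mul]; simp only [Matrix.mul_assoc]
      _ = Pᴴ * (xᴴ * S) * P := by rw [conjTranspose_mul]; simp only [Matrix.mul_assoc]
      _ = Pᴴ * S * P * diagonal d := by simp only [hx, Matrix.mul_assoc, h.2]
  have hij' := congrFun (congrFun hG i) j
  rw [diagonal_conjTranspose, diagonal_mul, mul_diagonal] at hij'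
  exact (mul_eq_zero.mp (by linear_combination hij' : (star (d i) - d j) * _ = 0)).resolve_left
    (sub_ne_zero.mpr hij)

lemma exists_star_eq {S : Matrix n n ℂ} (hS : IsUnit S.det) (hx : xᴴ * S = S * x)
    (h : IsEigenframe x P d) (i : n) : ∃ j, star (d i) = d j := by
  by_contra! hne
  have hdet : (Pᴴ * S * P).det = 0 :=
    det_eq_zero_of_row_eq_zero i fun j => h.gram_apply_eq_zero hx (hne j)
  rw [det_mul, det_mul, det_conjTranspose] at hdet
  exact (((h.1.star).mul hS).mul h.1).ne_zero hdet

end IsEigenframe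

lemma exists_pos_of_gram_eq_diagonal {S P : Matrix n n ℂ} {ν : n → ℝ} (hP : IsUnit P.det)
    (hG : Pᴴ * S * P = diagonal fun i => (ν i : ℂ)) (v : n → ℂ)
    (hv : 0 < (star v ⬝ᵥ (S *ᵥ v)).re) : ∃ i, 0 < ν i := by
  by_contra! hν
  set w := P⁻¹ *ᵥ v
  have hPw : P *ᵥ w = v := by rw [mulVec_mulVec, mul_nonsing_inv _ hP, one_mulVec]
  have hform : star v ⬝ᵥ (S *ᵥ v) = ((∑ i, ν i * normSq (w i) : ℝ) : ℂ) := by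
    rw [← hPw, star_mulVec, ← dotProduct_mulVec, mulVec_mulVec, mulVec_mulVec, hG]
    simp [dotProduct, mulVec_diagonal, normSq_eq_conj_mul_self]
    exact Finset.sum_congr rfl fun i _ => by ring
  rw [hform, ofReal_re] at hv
  exact hv.not_ge (Finset.sum_nonpos fun i _ => mul_nonpos_of_nonpos_of_nonneg (hν i)
    (normSq_nonneg _))

end Eigenframe

abbrev J : Matrix (Fin 3) (Fin 3) ℂ := diagonal ![1, 1, -1]

def IsU21 (g : Matrix (Fin 3) (Fin 3) ℂ) : Prop := gᴴ * J * g = J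

def IsNormalForm (D : Matrix (Fin 3) (Fin 3) ℂ) : Prop :=
  (∃ α₁ α₂ : ℝ, D = Matrix.diagonal ![(α₁ : ℂ), (α₂ : ℂ), (-α₁ - α₂ : ℂ)]) ∨
    (∃ α γ : ℝ, D =
      !![(2 * α : ℂ), 0, 0;
         0, (-α : ℂ), (γ : ℂ) * Complex.I;
         0, (γ : ℂ) * Complex.I, (-α : ℂ)])

def HasNormalFrame (x : Matrix (Fin 3) (Fin 3) ℂ) : Prop :=
  ∃ g D, IsU21 g ∧ x * g = g * D ∧ IsNormalForm D

lemma det_gram (P : Matrix (Fin 3) (Fin 3) ℂ) : (Pᴴ * J * P).det = -(normSq P.det : ℂ) := by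
  rw [det_mul, det_mul, det_conjTranspose, normSq_eq_conj_mul_self]
  simp [det_diagonal, Fin.prod_univ_three]

lemma det_gram_ne_zero {P : Matrix (Fin 3) (Fin 3) ℂ} (hP : IsUnit P.det) :
    (Pᴴ * J * P).det ≠ 0 := by
  rw [det_gram, neg_ne_zero, ofReal_ne_zero, normSq_eq_zero.ne]
  exact hP.ne_zero

lemma gram_isHermitian (P : Matrix (Fin 3) (Fin 3) ℂ) : (Pᴴ * J * P).IsHermitian :=
  isHermitian_conjTranspose_mul_mul P (isHermitian_diagonal_iff.mpr fun i => by
    fin_cases i <;> simp [isSelfAdjoint_iff])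

lemma IsEigenframe.add_add_eq_zero {x P : Matrix (Fin 3) (Fin 3) ℂ} {β : Fin 3 → ℝ}
    (h : IsEigenframe x P fun i => (β i : ℂ)) (htr : x.trace = 0) : β 0 + β 1 + β 2 = 0 := by
  have := h.sum_eq_trace
  rw [htr, Fin.sum_univ_three] at this
  exact_mod_cast this

lemma IsNormalForm.commute_diagonal {D : Matrix (Fin 3) (Fin 3) ℂ} (hD : IsNormalForm D)
    (w : ℂ) : Commute (diagonal ![w, 1, 1]) D := by
  rcases hD with ⟨α₁, α₂, rfl⟩ | ⟨α, γ, rfl⟩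
  · exact Matrix.commute_diagonal _ _
  · ext i j
    fin_cases i <;> fin_cases j <;> simp [mul_apply, Fin.sum_univ_three, mul_comm]

lemma HasNormalFrame.exists_SU21 {x : Matrix (Fin 3) (Fin 3) ℂ} (hx : HasNormalFrame x) :
    ∃ g : Matrix (Fin 3) (Fin 3) ℂ, g.det = 1 ∧ gᴴ * J * g = J ∧ IsNormalForm (g⁻¹ * x * g) := by
  obtain ⟨g, D, hg, hxg, hD⟩ := hx
  have hnorm : starRingEnd ℂ g.det * g.det = 1 := by
    have := det_gram g
    rw [hg, normSq_eq_conj_mul_self] at this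
    simp [det_diagonal, Fin.prod_univ_three] at this
    exact this.symm
  set h := diagonal ![starRingEnd ℂ g.det, 1, 1]
  have hdet : (g * h).det = 1 := by
    simp [h, det_mul, det_diagonal, Fin.prod_univ_three, mul_comm g.det, hnorm]
  refine ⟨g * h, hdet, ?_, ?_⟩
  · have hJh : hᴴ * J * h = J := by
      simp only [h, diagonal_conjTranspose, diagonal_mul_diagonal]
      congr 1
      funext i
      fin_cases i <;> simp [mul_comm g.det, hnorm]
    rw [conjTranspose_mul_mul_mul, show gᴴ * J * g = J from hg, hJh]
  · have hxgh : x * (g * h) = g * h * D := by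
      rw [← Matrix.mul_assoc, hxg, Matrix.mul_assoc, ← (hD.commute_diagonal _).eq,
        Matrix.mul_assoc]
    have hunit : IsUnit (g * h).det := by rw [hdet]; exact isUnit_one
    rwa [Matrix.mul_assoc, hxgh, ← Matrix.mul_assoc, nonsing_inv_mul _ hunit, Matrix.one_mul]

lemma exists_perm_apply_apply {a b i j : Fin 3} (hab : a ≠ b) (hij : i ≠ j) :
    ∃ σ : Equiv.Perm (Fin 3), σ a = i ∧ σ b = j := by
  revert a b i j
  decide

lemma exists_perm_signs {ν : Fin 3 → ℝ} (hprod : ν 0 * ν 1 * ν 2 < 0) (hpos : ∃ i, 0 < ν i) :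
    ∃ σ : Equiv.Perm (Fin 3), 0 < ν (σ 0) ∧ 0 < ν (σ 1) ∧ ν (σ 2) < 0 := by
  have h0 : ν 0 ≠ 0 := by rintro h; simp [h] at hprod
  have h1 : ν 1 ≠ 0 := by rintro h; simp [h] at hprod
  have h2 : ν 2 ≠ 0 := by rintro h; simp [h] at hprod
  obtain ⟨i, hi⟩ := hpos
  rcases h0.lt_or_gt with a | a <;> rcases h1.lt_or_gt with b | b <;>
    rcases h2.lt_or_gt with c | c
  · fin_cases i <;> simp at hi <;> linarith
  · nlinarith [mul_pos (mul_pos_of_neg_of_neg a b) c]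
  · nlinarith [mul_pos (mul_pos_of_neg_of_neg a c) b]
  · exact ⟨Equiv.swap 0 2, by simp [Equiv.swap_apply_def, a, b, c]⟩
  · nlinarith [mul_pos (mul_pos_of_neg_of_neg b c) a]
  · exact ⟨Equiv.swap 1 2, by simp [Equiv.swap_apply_def, a, b, c]⟩
  · exact ⟨1, by simp [a, b, c]⟩
  · nlinarith [mul_pos (mul_pos a b) c]

lemma isNormalForm_diagonal {β : Fin 3 → ℝ} (hβ : β 0 + β 1 + β 2 = 0) :
    IsNormalForm (diagonal fun i => (β i : ℂ)) := by
  refine Or.inl ⟨β 0, β 1, congrArg diagonal (funext fun i => ?_)⟩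
  fin_cases i
  · rfl
  · rfl
  · simp [show β 2 = -β 0 - β 1 by linarith]

lemma hasNormalFrame_zero : HasNormalFrame 0 :=
  ⟨1, 0, by simp [IsU21], by simp, by simpa using isNormalForm_diagonal (β := 0) (by simp)⟩

lemma hasNormalFrame_of_gram_eq_diagonal {x P : Matrix (Fin 3) (Fin 3) ℂ} {β ν : Fin 3 → ℝ}
    (hxP : x * P = P * diagonal fun i => (β i : ℂ)) (hβ : β 0 + β 1 + β 2 = 0)
    (hG : Pᴴ * J * P = diagonal fun i => (ν i : ℂ))
    (h0 : 0 < ν 0) (h1 : 0 < ν 1) (h2 : ν 2 < 0) : HasNormalFrame x := by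
  set s : Fin 3 → ℝ := fun i => (√|ν i|)⁻¹
  have hs : ∀ i, s i * ν i * s i = ν i / |ν i| := fun i => by
    rw [mul_right_comm, ← mul_inv, Real.mul_self_sqrt (abs_nonneg _), inv_mul_eq_div]
  refine ⟨P * diagonal fun i => (s i : ℂ), _, ?_, ?_, isNormalForm_diagonal hβ⟩
  · rw [IsU21, conjTranspose_mul_mul_mul, hG, diagonal_conjTranspose, diagonal_mul_diagonal,
      diagonal_mul_diagonal]
    congr 1
    funext i
    have hsi : ((s i * ν i * s i : ℝ) : ℂ) = ![1, 1, -1] i := by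
      rw [hs i]
      fin_cases i
      · simp [abs_of_pos h0, h0.ne']
      · simp [abs_of_pos h1, h1.ne']
      · simp [abs_of_neg h2, h2.ne]
    simpa using hsi
  · rw [← Matrix.mul_assoc, hxP, Matrix.mul_assoc, (Matrix.commute_diagonal _ _).eq,
      Matrix.mul_assoc]

lemma hasNormalFrame_of_isDiag_gram {x P : Matrix (Fin 3) (Fin 3) ℂ} {β : Fin 3 → ℝ}
    (h : IsEigenframe x P fun i => (β i : ℂ)) (htr : x.trace = 0)
    (hG : (Pᴴ * J * P).IsDiag) : HasNormalFrame x := by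
  set ν : Fin 3 → ℝ := fun i => ((Pᴴ * J * P) i i).re
  have hGν : Pᴴ * J * P = diagonal fun i => (ν i : ℂ) := by
    rw [← hG.diagonal_diag]
    exact congrArg diagonal (funext fun i => ((gram_isHermitian P).coe_re_apply_self i).symm)
  have hprod : ν 0 * ν 1 * ν 2 < 0 := by
    have hdet := det_gram P
    rw [hGν, det_diagonal, Fin.prod_univ_three] at hdet
    have hν : ν 0 * ν 1 * ν 2 = -normSq P.det := by exact_mod_cast hdet
    linarith [normSq_pos.mpr h.1.ne_zero]
  have hpos : ∃ i, 0 < ν i :=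
    exists_pos_of_gram_eq_diagonal h.1 hGν (Pi.single 0 1) (by simp)
  obtain ⟨σ, h0, h1, h2⟩ := exists_perm_signs hprod hpos
  refine hasNormalFrame_of_gram_eq_diagonal (ν := ν ∘ σ) (h.perm σ).2
    ((h.perm σ).add_add_eq_zero htr) ?_ h0 h1 h2
  rw [conjTranspose_submatrix_mul_mul, hGν, submatrix_diagonal_equiv]
  rfl

lemma exists_commute_isDiag_conjTranspose_mul_mul {G : Matrix (Fin 3) (Fin 3) ℂ}
    (hG : G.IsHermitian) (hdet : G.det ≠ 0) (h02 : G 0 2 = 0) (h12 : G 1 2 = 0)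
    {d : Fin 3 → ℂ} (hd : d 0 = d 1) :
    ∃ M : Matrix (Fin 3) (Fin 3) ℂ, IsUnit M.det ∧ Commute (diagonal d) M ∧
      (Mᴴ * G * M).IsDiag := by
  have h10 : G 1 0 = star (G 0 1) := (hG.apply 1 0).symm
  obtain ⟨a₀, a₁, ha⟩ : ∃ a₀ a₁ : ℂ,
      star a₀ * (G 0 0 * a₀ + G 0 1 * a₁) + star a₁ * (G 1 0 * a₀ + G 1 1 * a₁) ≠ 0 := by
    by_contra! h
    have h00 : G 0 0 = 0 := by simpa using h 1 0
    have h11 : G 1 1 = 0 := by simpa using h 0 1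
    have h01 : G 0 1 = 0 := by simpa [h00, h11, h10] using h 1 (star (G 0 1))
    exact hdet (det_eq_zero_of_row_eq_zero 0 fun j => by fin_cases j <;> assumption)
  -- `(b₀, b₁)` is orthogonal to `(a₀, a₁)` for the form given by the upper left block of `G`
  set b₀ := -star (star (G 0 1) * a₀ + star (G 1 1) * a₁)
  set b₁ := star (star (G 0 0) * a₀ + star (G 1 0) * a₁)
  refine ⟨!![a₀, b₀, 0; a₁, b₁, 0; 0, 0, 1], ?_, ?_, ?_⟩
  · rw [isUnit_iff_ne_zero, det_fin_three]
    convert ha using 1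
    simp [b₀, b₁]
    ring
  · ext i j
    fin_cases i <;> fin_cases j <;> simp [mul_apply, Fin.sum_univ_three, hd, mul_comm]
  · set M : Matrix (Fin 3) (Fin 3) ℂ := !![a₀, b₀, 0; a₁, b₁, 0; 0, 0, 1]
    have hK := isHermitian_conjTranspose_mul_mul M hG
    have k01 : (Mᴴ * G * M) 0 1 = 0 := by
      simp [M, mul_apply, Fin.sum_univ_three, b₀, b₁]
      ring
    have k02 : (Mᴴ * G * M) 0 2 = 0 := by simp [M, mul_apply, Fin.sum_univ_three, h02, h12]
    have k12 : (Mᴴ * G * M) 1 2 = 0 := by simp [M, mul_apply, Fin.sum_univ_three, h02, h12]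
    intro i j hij
    fin_cases i <;> fin_cases j <;> first
      | exact absurd rfl hij
      | assumption
      | (rw [← hK.apply]; simp [k01, k02, k12])

lemma hasNormalFrame_of_real {x P : Matrix (Fin 3) (Fin 3) ℂ} {β : Fin 3 → ℝ}
    (hx : xᴴ * J = J * x) (htr : x.trace = 0) (h : IsEigenframe x P fun i => (β i : ℂ)) :
    HasNormalFrame x := by
  have horth : ∀ {Q : Matrix (Fin 3) (Fin 3) ℂ} {γ : Fin 3 → ℝ},
      IsEigenframe x Q (fun i => (γ i : ℂ)) → ∀ {i j}, γ i ≠ γ j → (Qᴴ * J * Q) i j = 0 :=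
    fun hQ _ _ hij => hQ.gram_apply_eq_zero hx (by simpa using hij)
  by_cases hinj : Function.Injective β
  · exact hasNormalFrame_of_isDiag_gram h htr fun i j hij => horth h (hinj.ne hij)
  obtain ⟨i, j, hβij, hij⟩ : ∃ i j, β i = β j ∧ i ≠ j := by
    simpa [Function.Injective] using hinj
  obtain ⟨σ, rfl, rfl⟩ := exists_perm_apply_apply (show (0 : Fin 3) ≠ 1 by decide) hij
  have hσ := h.perm σ
  by_cases h2 : β (σ 0) = β (σ 2)
  · rw [hσ.eq_zero_of_forall_eq htr fun i j => by
      fin_cases i <;> fin_cases j <;> simp [← hβij, ← h2]]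
    exact hasNormalFrame_zero
  · obtain ⟨M, hM, hcomm, hdiag⟩ := exists_commute_isDiag_conjTranspose_mul_mul
      (gram_isHermitian _) (det_gram_ne_zero hσ.1) (horth hσ h2) (horth hσ (hβij ▸ h2))
      (d := (fun i => (β i : ℂ)) ∘ σ) (by simp [hβij])
    refine hasNormalFrame_of_isDiag_gram (P := P.submatrix id σ * M) (β := β ∘ σ)
      ⟨by rw [det_mul]; exact hσ.1.mul hM, ?_⟩ htr (by rwa [conjTranspose_mul_mul_mul])
    rw [← Matrix.mul_assoc, hσ.2, Matrix.mul_assoc, hcomm.eq, Matrix.mul_assoc]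
    rfl

lemma gram_eq_of_eigenvalues_nonreal {x P : Matrix (Fin 3) (Fin 3) ℂ} {d : Fin 3 → ℂ}
    (hx : xᴴ * J = J * x) (h : IsEigenframe x P d) (hd0 : (d 0).im = 0) (hd1 : (d 1).im ≠ 0)
    (hd2 : d 2 = star (d 1)) :
    ∃ (n : ℝ) (c : ℂ), 0 < n ∧ c ≠ 0 ∧ Pᴴ * J * P = !![(n : ℂ), 0, 0; 0, 0, c; 0, star c, 0] := by
  set G := Pᴴ * J * P
  have horth : ∀ i j, (star (d i)).im ≠ (d j).im → G i j = 0 := fun i j hij =>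
    h.gram_apply_eq_zero hx fun e => hij (congrArg im e)
  obtain ⟨g01, g02, g10, g20, g11, g22⟩ : G 0 1 = 0 ∧ G 0 2 = 0 ∧ G 1 0 = 0 ∧ G 2 0 = 0 ∧
      G 1 1 = 0 ∧ G 2 2 = 0 := by
    refine ⟨horth 0 1 ?_, horth 0 2 ?_, horth 1 0 ?_, horth 2 0 ?_, horth 1 1 ?_, horth 2 2 ?_⟩ <;>
      simp [hd0, hd2] <;> contrapose! hd1 <;> linarith
  set n := (G 0 0).re
  set c := G 1 2
  have hG : G = !![(n : ℂ), 0, 0; 0, 0, c; 0, star c, 0] := by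
    have g00 : G 0 0 = n := ((gram_isHermitian P).coe_re_apply_self 0).symm
    have g21 : G 2 1 = star c := ((gram_isHermitian P).apply 2 1).symm
    ext i j
    fin_cases i <;> fin_cases j <;> simp [g00, g01, g02, g10, g11, g20, g21, g22, c]
  have hdet : n * normSq c = normSq P.det := by
    have : G.det = _ := det_gram P
    rw [hG, det_fin_three] at this
    simp at this
    apply ofReal_injective
    rw [ofReal_mul, normSq_eq_conj_mul_self]
    linear_combination this
  have hc : c ≠ 0 := by
    rintro hc
    rw [hc, map_zero, mul_zero, eq_comm, normSq_eq_zero] at hdet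
    exact h.1.ne_zero hdet
  refine ⟨n, c, ?_, hc, hG⟩
  by_contra! hn
  nlinarith [normSq_pos.mpr hc, normSq_pos.mpr h.1.ne_zero]

lemma isU21_mul_of_gram_eq {P : Matrix (Fin 3) (Fin 3) ℂ} {n : ℝ} {c : ℂ} (hn : 0 < n)
    (hc : c ≠ 0) (hG : Pᴴ * J * P = !![(n : ℂ), 0, 0; 0, 0, c; 0, star c, 0]) :
    IsU21 (P * !![(√n : ℂ)⁻¹, 0, 0;
                  0, (√2 : ℂ)⁻¹, (√2 : ℂ)⁻¹;
                  0, (√2 : ℂ)⁻¹ * c⁻¹, -((√2 : ℂ)⁻¹ * c⁻¹)]) := by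
  have hs : (√n : ℂ)⁻¹ * n * (√n : ℂ)⁻¹ = 1 := by
    rw [mul_right_comm, ← mul_inv, ← ofReal_mul, Real.mul_self_sqrt hn.le,
      inv_mul_cancel₀ (ofReal_ne_zero.mpr hn.ne')]
  set r : ℂ := (√2 : ℂ)⁻¹
  have hr2 : starRingEnd ℂ r * r = 2⁻¹ := by
    rw [map_inv₀, conj_ofReal, ← mul_inv, ← ofReal_mul, Real.mul_self_sqrt zero_le_two]
    norm_num
  have hcc : (starRingEnd ℂ c)⁻¹ * starRingEnd ℂ c = 1 :=
    inv_mul_cancel₀ ((map_ne_zero _).mpr hc)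
  have hcc' : c * c⁻¹ = 1 := mul_inv_cancel₀ hc
  rw [IsU21, conjTranspose_mul_mul_mul, hG]
  ext i j
  fin_cases i <;> fin_cases j <;> simp [mul_apply, Fin.sum_univ_three]
  · simpa using hs
  · linear_combination (starRingEnd ℂ r * r) * (hcc + hcc') + 2 * hr2
  · linear_combination (starRingEnd ℂ r * r) * (hcc - hcc')
  · linear_combination (starRingEnd ℂ r * r) * (hcc' - hcc)
  · linear_combination -(starRingEnd ℂ r * r) * (hcc + hcc') - 2 * hr2

lemma hasNormalFrame_of_nonreal {x P : Matrix (Fin 3) (Fin 3) ℂ} {d : Fin 3 → ℂ}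
    (hx : xᴴ * J = J * x) (htr : x.trace = 0) (h : IsEigenframe x P d)
    (hd1 : (d 1).im ≠ 0) (hd2 : d 2 = star (d 1)) : HasNormalFrame x := by
  set a := (d 1).re
  set b := (d 1).im
  have hd1' : d 1 = a + b * I := (re_add_im _).symm
  have hd2' : d 2 = a - b * I := by rw [hd2, hd1']; simp [conj_ofReal]; ring
  have hd0 : d 0 = -2 * a := by
    have := h.sum_eq_trace
    rw [htr, Fin.sum_univ_three, hd1', hd2'] at this
    linear_combination this
  obtain ⟨n, c, hn, hc, hG⟩ :=
    gram_eq_of_eigenvalues_nonreal hx h (by simp [hd0]) hd1 hd2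
  refine ⟨_, _, isU21_mul_of_gram_eq hn hc hG, ?_, Or.inr ⟨-a, b, rfl⟩⟩
  rw [← Matrix.mul_assoc, h.2, Matrix.mul_assoc, Matrix.mul_assoc]
  congr 1
  ext i j
  fin_cases i <;> fin_cases j <;> simp [mul_apply, Fin.sum_univ_three, hd0, hd1', hd2'] <;> ring

lemma hasNormalFrame {x : Matrix (Fin 3) (Fin 3) ℂ} (hx : xᴴ * J = J * x) (htr : x.trace = 0)
    (hss : ∃ P : Matrix (Fin 3) (Fin 3) ℂ, IsUnit P.det ∧ (P⁻¹ * x * P).IsDiag) :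
    HasNormalFrame x := by
  obtain ⟨P, hP, hD⟩ := hss
  have h := isEigenframe_of_isDiag hP hD
  set d := (P⁻¹ * x * P).diag
  by_cases hreal : ∀ i, (d i).im = 0
  · have hd : d = fun i => ((d i).re : ℂ) := funext fun i => ext (by simp) (by simp [hreal i])
    rw [hd] at h
    exact hasNormalFrame_of_real hx htr h
  obtain ⟨i, hi⟩ := not_forall.mp hreal
  have hJ : IsUnit J.det := by simp [det_diagonal, Fin.prod_univ_three]
  obtain ⟨j, hj⟩ := h.exists_star_eq hJ hx i
  have hij : i ≠ j := by rintro rfl; exact hi (conj_eq_iff_im.mp hj)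
  obtain ⟨σ, rfl, rfl⟩ := exists_perm_apply_apply (show (1 : Fin 3) ≠ 2 by decide) hij
  exact hasNormalFrame_of_nonreal hx htr (h.perm σ) hi hj.symm

end SU21

theorem stmt10_general (J : Matrix (Fin 3) (Fin 3) ℂ) (hJ : J = Matrix.diagonal ![1, 1, -1])
    (x : Matrix (Fin 3) (Fin 3) ℂ)
    (hherm : x.conjTranspose * J = J * x)
    (htr : x.trace = 0)
    -- `x` is semisimple, i.e. diagonalizable over `ℂ`
    (hss : ∃ P : Matrix (Fin 3) (Fin 3) ℂ, IsUnit P.det ∧ (P⁻¹ * x * P).IsDiag) :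
    ∃ g : Matrix (Fin 3) (Fin 3) ℂ, g.det = 1 ∧ g.conjTranspose * J * g = J ∧
      ((∃ α₁ α₂ : ℝ, g⁻¹ * x * g = Matrix.diagonal ![(α₁ : ℂ), (α₂ : ℂ), (-α₁ - α₂ : ℂ)]) ∨
        (∃ α γ : ℝ, g⁻¹ * x * g =
          !![(2 * α : ℂ), 0, 0;
             0, (-α : ℂ), (γ : ℂ) * Complex.I;
             0, (γ : ℂ) * Complex.I, (-α : ℂ)])) := by
  subst hJ
  exact (SU21.hasNormalFrame hherm htr hss).exists_SU21

/-- Every nonzero semisimple element of `i·𝔰𝔲(2,1)` (trace-free `J`-Hermitian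
matrices, `J = diag(1,1,−1)`) is `SU(2,1)`-conjugate to a real diagonal matrix
`diag(α₁, α₂, −α₁−α₂)` or to `[[2α,0,0],[0,−α,γi],[0,γi,−α]]` with `α, γ ∈ ℝ`. -/
theorem stmt10 (J : Matrix (Fin 3) (Fin 3) ℂ) (hJ : J = Matrix.diagonal ![1, 1, -1])
    (x : Matrix (Fin 3) (Fin 3) ℂ)
    (hherm : x.conjTranspose * J = J * x)
    (htr : x.trace = 0)
    (hne : x ≠ 0)
    -- `x` is semisimple, i.e. diagonalizable over `ℂ`
    (hss : ∃ P : Matrix (Fin 3) (Fin 3) ℂ, IsUnit P.det ∧ (P⁻¹ * x * P).IsDiag) :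
    ∃ g : Matrix (Fin 3) (Fin 3) ℂ, g.det = 1 ∧ g.conjTranspose * J * g = J ∧
      ((∃ α₁ α₂ : ℝ, g⁻¹ * x * g = Matrix.diagonal ![(α₁ : ℂ), (α₂ : ℂ), (-α₁ - α₂ : ℂ)]) ∨
        (∃ α γ : ℝ, g⁻¹ * x * g =
          !![(2 * α : ℂ), 0, 0;
             0, (-α : ℂ), (γ : ℂ) * Complex.I;
             0, (γ : ℂ) * Complex.I, (-α : ℂ)])) :=
  stmt10_general J hJ x hherm htr hss
end
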